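/- Let G and G' be (possibly infinite) simple graphs without isolated vertices, with G connected and having at least 3 vertices. An edge isomorphism ψ : E(G) → E(G') is induced by a graph isomorphism G → G' if and only if ψ does not have a K3,K1,3-pair; moreover, when it is induced, the inducing graph isomorphism is unique. -/

import Mathlib

open SimpleGraph

/-- Two edges (elements of `Sym2 V`) share an endpoint. -/
def SharesEndpoint {V : Type*} (e f : Sym2 V) : Prop := ∃ v, v ∈ e ∧ v ∈ f

/-- `ψ` is an edge isomorphism: a bijection of edge sets such that two edges share an
endpoint iff their images share an endpoint. -/
def IsEdgeIsom {V V' : Type*} (G : SimpleGraph V) (G' : SimpleGraph V')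
    (ψ : G.edgeSet ≃ G'.edgeSet) : Prop :=
  ∀ e f : G.edgeSet, SharesEndpoint (e : Sym2 V) (f : Sym2 V) ↔
    SharesEndpoint (ψ e : Sym2 V') (ψ f : Sym2 V')

/-- A set of edges spans a triangle `K₃`. -/
def IsTriangleEdgeSet {V : Type*} (s : Set (Sym2 V)) : Prop :=
  ∃ a b c : V, a ≠ b ∧ a ≠ c ∧ b ≠ c ∧ s = {s(a, b), s(b, c), s(a, c)}

/-- A set of edges spans a 3-star `K_{1,3}` with center `c`. -/
def IsThreeStarEdgeSet {V : Type*} (s : Set (Sym2 V)) : Prop :=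
  ∃ c a b d : V, a ≠ b ∧ a ≠ d ∧ b ≠ d ∧ c ≠ a ∧ c ≠ b ∧ c ≠ d ∧
    s = {s(c, a), s(c, b), s(c, d)}

/-- `ψ` has a `K₃, K_{1,3}`-pair: a set `η` of edges of `G` such that the subgraph spanned
by `η` and the subgraph spanned by `ψ(η)` are a triangle and a 3-star, in either order. -/
def HasK3K13Pair {V V' : Type*} (G : SimpleGraph V) (G' : SimpleGraph V')
    (ψ : G.edgeSet ≃ G'.edgeSet) : Prop :=
  ∃ η : Set G.edgeSet,
    (IsTriangleEdgeSet ((fun e : G.edgeSet => (e : Sym2 V)) '' η) ∧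
      IsThreeStarEdgeSet ((fun e : G'.edgeSet => (e : Sym2 V')) '' (ψ '' η))) ∨
    (IsThreeStarEdgeSet ((fun e : G.edgeSet => (e : Sym2 V)) '' η) ∧
      IsTriangleEdgeSet ((fun e : G'.edgeSet => (e : Sym2 V')) '' (ψ '' η)))

/-- `ψ` is induced by the graph isomorphism `φ`. -/
def InducedByIso {V V' : Type*} (G : SimpleGraph V) (G' : SimpleGraph V')
    (ψ : G.edgeSet ≃ G'.edgeSet) (φ : G ≃g G') : Prop :=
  ∀ e : G.edgeSet, (ψ e : Sym2 V') = Sym2.map (⇑φ) (e : Sym2 V)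


/-!
If `ψ` has no `K₃,K_{1,3}`-pair, take two edges at a vertex `v`; their images meet in a vertex `x`,
and every further edge at `v` is mapped to an edge through `x`, since otherwise three edges at `v`
would be mapped onto a triangle. The same argument for `ψ⁻¹` at `x` shows that the edges at `v`
are mapped exactly onto the edges at `x`; a vertex of degree one gets the other endpoint of the
image of its edge, where the image of its neighbour is already known. In a connected graph on at
least three vertices such an `x` is unique and `v ↦ x` is injective, so it is an isomorphism
inducing `ψ`, and it is the only one. Conversely, an induced `ψ` maps triangles to triangles and
stars to stars.
-/

lemma exists_ne_ne_of_injective_fin_three {V : Type*} {f : Fin 3 → V} (hf : Function.Injective f)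
    (v w : V) : ∃ u, u ≠ v ∧ u ≠ w := by
  by_contra! h
  have hrange : Set.range f ⊆ {v, w} := by
    rintro _ ⟨i, rfl⟩
    by_cases hv : f i = v
    exacts [Or.inl hv, Or.inr (h _ hv)]
  have := Set.ncard_le_ncard hrange
  rw [Set.ncard_range_of_injective hf, Nat.card_eq_fintype_card, Fintype.card_fin] at this
  linarith [Set.ncard_insert_le v {w}, Set.ncard_singleton w]

lemma SimpleGraph.edgeSet_eq_of_ne_mem {V : Type*} {G : SimpleGraph V} {e f : G.edgeSet}
    {x y : V} (hxy : x ≠ y) (hxe : x ∈ (e : Sym2 V)) (hye : y ∈ (e : Sym2 V))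
    (hxf : x ∈ (f : Sym2 V)) (hyf : y ∈ (f : Sym2 V)) : e = f :=
  Subtype.ext (Sym2.eq_of_ne_mem hxy hxe hye hxf hyf)

namespace SimpleGraph

variable {V : Type*} {G : SimpleGraph V}

lemma Connected.exists_edge_ne_mem (hconn : G.Connected) (hV : ∀ v w : V, ∃ u, u ≠ v ∧ u ≠ w)
    (v w : V) :
    ∃ f : G.edgeSet, (f : Sym2 V) ≠ s(v, w) ∧ (v ∈ (f : Sym2 V) ∨ w ∈ (f : Sym2 V)) := by
  obtain ⟨u, huv, huw⟩ := hV v w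
  obtain ⟨d, -, hd, hd'⟩ := (hconn.preconnected v u).some.exists_boundary_dart {v, w}
    (Set.mem_insert v _) (by simp [huv, huw])
  refine ⟨⟨s(d.fst, d.snd), d.adj⟩, fun h => hd' ?_, ?_⟩
  · have : d.snd ∈ s(v, w) := by rw [← h]; exact Sym2.mem_mk_right _ _
    simpa [Sym2.mem_iff] using this
  · rcases hd with h | h
    exacts [Or.inl (h ▸ Sym2.mem_mk_left _ _), Or.inr (h ▸ Sym2.mem_mk_left _ _)]

lemma Connected.eq_of_forall_mem_edge_iff (hconn : G.Connected)
    (hV : ∀ v w : V, ∃ u, u ≠ v ∧ u ≠ w) (hG : ∀ v : V, ∃ w, G.Adj v w) {a b : V}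
    (hab : ∀ g : G.edgeSet, a ∈ (g : Sym2 V) ↔ b ∈ (g : Sym2 V)) : a = b := by
  by_contra hne
  have hstar : ∀ g : G.edgeSet, a ∈ (g : Sym2 V) ∨ b ∈ (g : Sym2 V) → (g : Sym2 V) = s(a, b) :=
    fun g hg => (Sym2.mem_and_mem_iff hne).1
      (hg.elim (fun ha => ⟨ha, (hab g).1 ha⟩) (fun hb => ⟨(hab g).2 hb, hb⟩))
  obtain ⟨c, hac⟩ := hG a
  have hadj : G.Adj a b := by
    rw [← mem_edgeSet, ← hstar ⟨s(a, c), hac⟩ (Or.inl (Sym2.mem_mk_left a c))]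
    exact hac
  obtain ⟨f, hf, hmem⟩ := hconn.exists_edge_ne_mem hV a b
  exact hf (hstar f hmem)

end SimpleGraph

lemma IsTriangleEdgeSet.image_map {V V' : Type*} {s : Set (Sym2 V)} {φ : V → V'}
    (hφ : Function.Injective φ) (hs : IsTriangleEdgeSet s) :
    IsTriangleEdgeSet (Sym2.map φ '' s) := by
  obtain ⟨a, b, c, hab, hac, hbc, rfl⟩ := hs
  exact ⟨φ a, φ b, φ c, hφ.ne hab, hφ.ne hac, hφ.ne hbc, by simp [Set.image_insert_eq]⟩

lemma IsThreeStarEdgeSet.image_map {V V' : Type*} {s : Set (Sym2 V)} {φ : V → V'}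
    (hφ : Function.Injective φ) (hs : IsThreeStarEdgeSet s) :
    IsThreeStarEdgeSet (Sym2.map φ '' s) := by
  obtain ⟨c, a, b, d, hab, had, hbd, hca, hcb, hcd, rfl⟩ := hs
  exact ⟨φ c, φ a, φ b, φ d, hφ.ne hab, hφ.ne had, hφ.ne hbd, hφ.ne hca, hφ.ne hcb, hφ.ne hcd,
    by simp [Set.image_insert_eq]⟩

lemma IsTriangleEdgeSet.not_isThreeStarEdgeSet {V : Type*} {s : Set (Sym2 V)}
    (ht : IsTriangleEdgeSet s) : ¬ IsThreeStarEdgeSet s := by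
  obtain ⟨a, b, c, hab, hac, hbc, rfl⟩ := ht
  rintro ⟨d, _, _, _, -, -, -, -, -, -, hstar⟩
  have hd : ∀ z ∈ ({s(a, b), s(b, c), s(a, c)} : Set (Sym2 V)), d ∈ z := by
    rw [hstar]; rintro z (rfl | rfl | rfl) <;> simp
  have h1 := hd s(a, b) (by simp)
  have h2 := hd s(b, c) (by simp)
  have h3 := hd s(a, c) (by simp)
  simp only [Sym2.mem_iff] at h1 h2 h3
  grind

lemma isThreeStarEdgeSet_of_mem {V : Type*} {v : V} {e f g : Sym2 V} (he : ¬ e.IsDiag)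
    (hf : ¬ f.IsDiag) (hg : ¬ g.IsDiag) (hve : v ∈ e) (hvf : v ∈ f) (hvg : v ∈ g)
    (hef : e ≠ f) (heg : e ≠ g) (hfg : f ≠ g) : IsThreeStarEdgeSet {e, f, g} := by
  have hother : ∀ {z z' : Sym2 V} (hz : v ∈ z) (hz' : v ∈ z'), z ≠ z' →
      Sym2.Mem.other hz ≠ Sym2.Mem.other hz' := fun hz hz' hne h =>
    hne (by rw [← Sym2.other_spec hz, ← Sym2.other_spec hz', h])
  exact ⟨v, _, _, _, hother hve hvf hef, hother hve hvg heg, hother hvf hvg hfg,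
    (Sym2.other_ne he hve).symm, (Sym2.other_ne hf hvf).symm, (Sym2.other_ne hg hvg).symm,
    by rw [Sym2.other_spec, Sym2.other_spec, Sym2.other_spec]⟩

section EdgeIsom

variable {V V' : Type*} {G : SimpleGraph V} {G' : SimpleGraph V'} {ψ : G.edgeSet ≃ G'.edgeSet}

def IsStarImage (ψ : G.edgeSet ≃ G'.edgeSet) (v : V) (x : V') : Prop :=
  ∀ g : G.edgeSet, v ∈ (g : Sym2 V) ↔ x ∈ (ψ g : Sym2 V')

lemma IsEdgeIsom.symm (hψ : IsEdgeIsom G G' ψ) : IsEdgeIsom G' G ψ.symm := fun e f => by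
  simpa using (hψ (ψ.symm e) (ψ.symm f)).symm

lemma HasK3K13Pair.of_symm (h : HasK3K13Pair G' G ψ.symm) : HasK3K13Pair G G' ψ := by
  obtain ⟨η, hη⟩ := h
  refine ⟨ψ.symm '' η, ?_⟩
  rw [Equiv.image_symm_image]
  exact hη.symm.imp And.symm And.symm

lemma hasK3K13Pair_of_isThreeStarEdgeSet {e f g : G.edgeSet}
    (hs : IsThreeStarEdgeSet {(e : Sym2 V), (f : Sym2 V), (g : Sym2 V)})
    (ht : IsTriangleEdgeSet {(ψ e : Sym2 V'), (ψ f : Sym2 V'), (ψ g : Sym2 V')}) :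
    HasK3K13Pair G G' ψ :=
  ⟨{e, f, g}, Or.inr ⟨by simpa [Set.image_insert_eq] using hs,
    by simpa [Set.image_insert_eq] using ht⟩⟩

lemma IsEdgeIsom.exists_forall_mem_of_not_hasK3K13Pair (hψ : IsEdgeIsom G G' ψ)
    (hnp : ¬ HasK3K13Pair G G' ψ) {v : V} {e f : G.edgeSet} (he : v ∈ (e : Sym2 V))
    (hf : v ∈ (f : Sym2 V)) (hef : e ≠ f) :
    ∃ x : V', ∀ g : G.edgeSet, v ∈ (g : Sym2 V) → x ∈ (ψ g : Sym2 V') := by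
  obtain ⟨x, hxe, hxf⟩ := (hψ e f).1 ⟨v, he, hf⟩
  refine ⟨x, fun g hg => ?_⟩
  by_contra hxg
  obtain ⟨p, hpg, hpe⟩ := (hψ g e).1 ⟨v, hg, he⟩
  obtain ⟨q, hqg, hqf⟩ := (hψ g f).1 ⟨v, hg, hf⟩
  have hpx : p ≠ x := by rintro rfl; exact hxg hpg
  have hqx : q ≠ x := by rintro rfl; exact hxg hqg
  have hpq : p ≠ q := by
    rintro rfl
    exact hef (ψ.injective (edgeSet_eq_of_ne_mem hpx hpe hxe hqf hxf))
  have hge : g ≠ e := by rintro rfl; exact hxg hxe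
  have hgf : g ≠ f := by rintro rfl; exact hxg hxf
  refine hnp (hasK3K13Pair_of_isThreeStarEdgeSet (isThreeStarEdgeSet_of_mem
    (G.not_isDiag_of_mem_edgeSet e.2) (G.not_isDiag_of_mem_edgeSet f.2)
    (G.not_isDiag_of_mem_edgeSet g.2) he hf hg
    (Subtype.coe_injective.ne hef) (Subtype.coe_injective.ne hge.symm)
    (Subtype.coe_injective.ne hgf.symm))
    ⟨x, p, q, hpx.symm, hqx.symm, hpq, ?_⟩)
  rw [(Sym2.mem_and_mem_iff hpx.symm).1 ⟨hxe, hpe⟩, (Sym2.mem_and_mem_iff hqx.symm).1 ⟨hxf, hqf⟩,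
    (Sym2.mem_and_mem_iff hpq).1 ⟨hpg, hqg⟩, Set.pair_comm]

lemma IsEdgeIsom.exists_isStarImage_of_ne (hψ : IsEdgeIsom G G' ψ)
    (hnp : ¬ HasK3K13Pair G G' ψ) {v : V} {e f : G.edgeSet} (he : v ∈ (e : Sym2 V))
    (hf : v ∈ (f : Sym2 V)) (hef : e ≠ f) : ∃ x, IsStarImage ψ v x := by
  obtain ⟨x, hx⟩ := hψ.exists_forall_mem_of_not_hasK3K13Pair hnp he hf hef
  obtain ⟨u, hu⟩ := hψ.symm.exists_forall_mem_of_not_hasK3K13Pair (fun h => hnp h.of_symm)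
    (hx e he) (hx f hf) (ψ.injective.ne hef)
  have hue : u ∈ (e : Sym2 V) := by simpa using hu (ψ e) (hx e he)
  have huf : u ∈ (f : Sym2 V) := by simpa using hu (ψ f) (hx f hf)
  obtain rfl : u = v := by
    by_contra huv
    exact hef (edgeSet_eq_of_ne_mem huv hue he huf hf)
  exact ⟨x, fun g => ⟨hx g, fun hxg => by simpa using hu (ψ g) hxg⟩⟩

lemma IsEdgeIsom.exists_isStarImage (hψ : IsEdgeIsom G G' ψ) (hnp : ¬ HasK3K13Pair G G' ψ)
    (hconn : G.Connected) (hV : ∀ v w : V, ∃ u, u ≠ v ∧ u ≠ w) (hG : ∀ v : V, ∃ w, G.Adj v w)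
    (v : V) : ∃ x, IsStarImage ψ v x := by
  obtain ⟨w, hvw⟩ := hG v
  let e : G.edgeSet := ⟨s(v, w), hvw⟩
  by_cases hdeg : ∃ f : G.edgeSet, v ∈ (f : Sym2 V) ∧ f ≠ e
  · obtain ⟨f, hvf, hfe⟩ := hdeg
    exact hψ.exists_isStarImage_of_ne hnp hvf (Sym2.mem_mk_left v w) hfe
  push Not at hdeg
  obtain ⟨f, hfe, hvf | hwf⟩ := hconn.exists_edge_ne_mem hV v w
  · exact absurd (congrArg Subtype.val (hdeg f hvf)) hfe
  obtain ⟨x, hx⟩ := hψ.exists_isStarImage_of_ne (f := e) hnp hwf (Sym2.mem_mk_right v w)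
    (fun h => hfe (congrArg Subtype.val h))
  -- `e` is the only edge at `v`, and `v` goes to the endpoint of `ψ e` other than the image `x`
  -- of `w`.
  have hxe : x ∈ (ψ e : Sym2 V') := (hx e).1 (Sym2.mem_mk_right v w)
  have hyx : Sym2.Mem.other hxe ≠ x := Sym2.other_ne (G'.not_isDiag_of_mem_edgeSet (ψ e).2) hxe
  refine ⟨Sym2.Mem.other hxe, fun g =>
    ⟨fun hvg => hdeg g hvg ▸ Sym2.other_mem hxe, fun hyg => ?_⟩⟩
  by_contra hvg
  obtain ⟨u, hug, hue⟩ := (hψ g e).2 ⟨_, hyg, Sym2.other_mem hxe⟩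
  rcases Sym2.mem_iff.1 hue with rfl | rfl
  · exact hvg hug
  · have hge : e = g := ψ.injective
      (edgeSet_eq_of_ne_mem hyx (Sym2.other_mem hxe) hxe hyg ((hx g).1 hug))
    exact hvg (hge ▸ Sym2.mem_mk_left _ _)

lemma IsEdgeIsom.isStarImage_unique (hψ : IsEdgeIsom G G' ψ) (hconn : G.Connected)
    (hV : ∀ v w : V, ∃ u, u ≠ v ∧ u ≠ w) (hG : ∀ v : V, ∃ w, G.Adj v w) {v : V} {x y : V'}
    (hx : IsStarImage ψ v x) (hy : IsStarImage ψ v y) : x = y := by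
  by_contra hxy
  obtain ⟨w, hvw⟩ := hG v
  let e : G.edgeSet := ⟨s(v, w), hvw⟩
  have hve : v ∈ (e : Sym2 V) := Sym2.mem_mk_left v w
  have hψe : (ψ e : Sym2 V') = s(x, y) :=
    (Sym2.mem_and_mem_iff hxy).1 ⟨(hx e).1 hve, (hy e).1 hve⟩
  obtain ⟨f, hfe, hf⟩ := hconn.exists_edge_ne_mem hV v w
  suffices hvf : v ∈ (f : Sym2 V) from
    hfe (congrArg Subtype.val (ψ.injective (edgeSet_eq_of_ne_mem hxy ((hx f).1 hvf)
      ((hy f).1 hvf) ((hx e).1 hve) ((hy e).1 hve))))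
  rcases hf with hvf | hwf
  · exact hvf
  obtain ⟨z, hzf, hze⟩ := (hψ f e).1 ⟨w, hwf, Sym2.mem_mk_right v w⟩
  rw [hψe, Sym2.mem_iff] at hze
  rcases hze with rfl | rfl
  exacts [(hx f).2 hzf, (hy f).2 hzf]

lemma map_eq_of_isStarImage {φ : V → V'} (hφ : ∀ v, IsStarImage ψ v (φ v))
    (hinj : Function.Injective φ) (e : G.edgeSet) : (ψ e : Sym2 V') = Sym2.map φ e := by
  obtain ⟨e, he⟩ := e
  induction e using Sym2.inductionOn with
  | hf a b =>
    exact (Sym2.mem_and_mem_iff (hinj.ne (G.ne_of_adj he))).1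
      ⟨(hφ a _).1 (Sym2.mem_mk_left a b), (hφ b _).1 (Sym2.mem_mk_right a b)⟩

lemma adj_iff_of_map_eq {φ : V → V'} (hinj : Function.Injective φ)
    (hmap : ∀ e : G.edgeSet, (ψ e : Sym2 V') = Sym2.map φ e) {a b : V} :
    G'.Adj (φ a) (φ b) ↔ G.Adj a b := by
  constructor
  · intro h
    have hg := hmap (ψ.symm ⟨s(φ a, φ b), h⟩)
    rw [Equiv.apply_symm_apply] at hg
    have hab : (ψ.symm ⟨s(φ a, φ b), h⟩ : Sym2 V) = s(a, b) :=
      Sym2.map.injective hinj (hg.symm.trans (Sym2.map_mk φ a b).symm)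
    rw [← mem_edgeSet, ← hab]
    exact (ψ.symm ⟨s(φ a, φ b), h⟩).2
  · intro h
    simpa [hmap] using (ψ ⟨s(a, b), h⟩).2

lemma surjective_of_map_eq (hG' : ∀ v : V', ∃ w, G'.Adj v w) {φ : V → V'}
    (hmap : ∀ e : G.edgeSet, (ψ e : Sym2 V') = Sym2.map φ e) : Function.Surjective φ := by
  intro x
  obtain ⟨y, hxy⟩ := hG' x
  have hx : x ∈ Sym2.map φ (ψ.symm ⟨s(x, y), hxy⟩ : Sym2 V) := by
    rw [← hmap, Equiv.apply_symm_apply]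
    exact Sym2.mem_mk_left x y
  obtain ⟨a, -, ha⟩ := Sym2.mem_map.1 hx
  exact ⟨a, ha⟩

lemma exists_inducedByIso_of_isStarImage (hG' : ∀ v : V', ∃ w, G'.Adj v w) {φ : V → V'}
    (hφ : ∀ v, IsStarImage ψ v (φ v)) (hinj : Function.Injective φ) :
    ∃ χ : G ≃g G', InducedByIso G G' ψ χ := by
  have hmap := map_eq_of_isStarImage hφ hinj
  exact ⟨⟨Equiv.ofBijective φ ⟨hinj, surjective_of_map_eq hG' hmap⟩,
    adj_iff_of_map_eq hinj hmap⟩, hmap⟩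

lemma InducedByIso.isStarImage {χ : G ≃g G'} (hχ : InducedByIso G G' ψ χ) (v : V) :
    IsStarImage ψ v (χ v) := fun g => by
  rw [hχ g, Sym2.mem_map]
  exact ⟨fun hv => ⟨v, hv, rfl⟩, fun ⟨a, ha, h⟩ => χ.injective h ▸ ha⟩

lemma InducedByIso.not_hasK3K13Pair {χ : G ≃g G'} (hχ : InducedByIso G G' ψ χ) :
    ¬ HasK3K13Pair G G' ψ := by
  rintro ⟨η, h⟩
  have himage : ((fun e : G'.edgeSet => (e : Sym2 V')) '' (ψ '' η)) =
      Sym2.map χ '' ((fun e : G.edgeSet => (e : Sym2 V)) '' η) := by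
    rw [Set.image_image, Set.image_image]
    exact Set.image_congr fun e _ => hχ e
  rw [himage] at h
  rcases h with ⟨ht, hs⟩ | ⟨hs, ht⟩
  · exact (ht.image_map χ.injective).not_isThreeStarEdgeSet hs
  · exact ht.not_isThreeStarEdgeSet (hs.image_map χ.injective)

end EdgeIsom

/-- Whitney's theorem for possibly infinite graphs: if `G` is connected with at least 3
vertices and `G`, `G'` have no isolated vertices, an edge isomorphism `ψ` is induced by a
graph isomorphism iff it has no `K₃,K_{1,3}`-pair; moreover the inducing isomorphism is
unique. -/
theorem whitney_infinite {V V' : Type*}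
    (G : SimpleGraph V) (G' : SimpleGraph V')
    (hG : ∀ v : V, ∃ w, G.Adj v w) (hG' : ∀ v : V', ∃ w, G'.Adj v w)
    (hconn : G.Connected) (h3 : ∃ f : Fin 3 → V, Function.Injective f)
    (ψ : G.edgeSet ≃ G'.edgeSet) (hψ : IsEdgeIsom G G' ψ) :
    ((∃ φ : G ≃g G', InducedByIso G G' ψ φ) ↔ ¬ HasK3K13Pair G G' ψ) ∧
    (∀ φ φ' : G ≃g G', InducedByIso G G' ψ φ → InducedByIso G G' ψ φ' → φ = φ') := by
  obtain ⟨f, hf⟩ := h3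
  have hV := exists_ne_ne_of_injective_fin_three hf
  refine ⟨⟨fun ⟨φ, hφ⟩ => hφ.not_hasK3K13Pair, fun hnp => ?_⟩, fun φ φ' hφ hφ' => ?_⟩
  · choose φ hφ using hψ.exists_isStarImage hnp hconn hV hG
    refine exists_inducedByIso_of_isStarImage hG' hφ fun a b hab => ?_
    exact hconn.eq_of_forall_mem_edge_iff hV hG fun g => by rw [hφ a g, hφ b g, hab]
  · ext v
    exact hψ.isStarImage_unique hconn hV hG (hφ.isStarImage v) (hφ'.isStarImage v)
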